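/- arXiv:2211.12246 — 3 statements merged into one kernel-verified Lean document; each statement's English description precedes it below -/
import Mathlib

section
/- For every Lebesgue measurable set A ⊆ Ω there exists a uniquely determined minimizer u_A ∈ L²(Ω) of the functional u ↦ J(u,A), and this minimizer satisfies χ_A·u_A = u_A almost everywhere. -/
open MeasureTheory ENNReal Set Filter Metric Topology
open scoped Classical symmDiff NNReal

noncomputable section

namespace L0Control

variable {α : Type*} [MeasurableSpace α]

/-- The characteristic function `χ_A` of a set `A`, as a real-valued function. -/
def chi (A : Set α) (x : α) : ℝ := A.indicator (fun _ => (1 : ℝ)) x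

/-- Pointwise multiplication of `u ∈ L²(μ)` by the characteristic function of `A`,
as an element of `L²(μ)` (junk value `0` if `A` is not measurable). -/
def chiMul {μ : Measure α} (A : Set α) (u : Lp ℝ 2 μ) : Lp ℝ 2 μ :=
  if hA : MeasurableSet A then
    MemLp.toLp (A.indicator (u : α → ℝ)) ((Lp.memLp u).indicator hA)
  else 0

variable {Y : Type*} [NormedAddCommGroup Y] [InnerProductSpace ℝ Y]

/-- The objective functional
`J(u, A) = ½‖S(χ_A u) − y_d‖² + ∫_Ω (g(u(x)) + χ_A(x) β(x)) dx`,
with values in `EReal` (the `g`-part may be `+∞`). -/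
def Jfun {μ : Measure α} (S : Lp ℝ 2 μ →L[ℝ] Y) (yd : Y) (g : ℝ → ℝ≥0∞) (β : α → ℝ)
    (u : Lp ℝ 2 μ) (A : Set α) : EReal :=
  ((2⁻¹ * ‖S (chiMul A u) - yd‖ ^ 2 + ∫ x in A, β x ∂μ : ℝ) : EReal)
    + ((∫⁻ x, g (u x) ∂μ : ℝ≥0∞) : EReal)

/-- `u` minimizes `J(·, A)` over `L²(μ)`. -/
def IsMinimizer {μ : Measure α} (S : Lp ℝ 2 μ →L[ℝ] Y) (yd : Y) (g : ℝ → ℝ≥0∞) (β : α → ℝ)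
    (A : Set α) (u : Lp ℝ 2 μ) : Prop :=
  ∀ v : Lp ℝ 2 μ, Jfun S yd g β u A ≤ Jfun S yd g β v A

/-- `(u, y, p)` is a solution triple of the problem `(P_A)`:
`u` minimizes `J(·, A)`, `y = S(χ_A u)` is the state and `p = S*(y − y_d)` the adjoint state. -/
def IsSolution {μ : Measure α} [CompleteSpace Y] (S : Lp ℝ 2 μ →L[ℝ] Y) (yd : Y)
    (g : ℝ → ℝ≥0∞) (β : α → ℝ) (A : Set α) (u : Lp ℝ 2 μ) (y : Y) (p : Lp ℝ 2 μ) : Prop :=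
  IsMinimizer S yd g β A u ∧ y = S (chiMul A u) ∧
    p = ContinuousLinearMap.adjoint S (y - yd)

/-- The value function `J(A) = inf_{u ∈ L²} J(u, A)`. -/
def Jval {μ : Measure α} (S : Lp ℝ 2 μ →L[ℝ] Y) (yd : Y) (g : ℝ → ℝ≥0∞) (β : α → ℝ)
    (A : Set α) : EReal :=
  ⨅ u : Lp ℝ 2 μ, Jfun S yd g β u A

/-- `H̄(p) = min_{u ∈ ℝ} (p·u + g(u)) = −g*(−p)`, with values in `EReal`. -/
def Hbar (g : ℝ → ℝ≥0∞) (p : ℝ) : EReal :=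
  ⨅ u : ℝ, ((p * u : ℝ) : EReal) + (g u : EReal)

/-- `H̄(p)` as a real number (it is finite under the standing assumptions). -/
def HbarR (g : ℝ → ℝ≥0∞) (p : ℝ) : ℝ := (Hbar g p).toReal

/-- Absolute value on `EReal`. -/
def eabs (x : EReal) : EReal := max x (-x)

end L0Control

open L0Control

/-!
Up to the constant `∫_A β`, `J(·, A)` is an `ℝ≥0∞`-valued functional on `L²` that is lower
semicontinuous (Fatou's lemma along an a.e. convergent subsequence) and midpoint strongly convex
(the tracking term is convex and `u ↦ ∫ g ∘ u` inherits the strong convexity of `g`). For such a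
functional, two points whose values lie within `ε` of the infimum are at distance `O(√ε)`, so a
minimizing sequence is Cauchy, its limit is a minimizer by lower semicontinuity, and any two
minimizers coincide. Since `g 0 = 0`, replacing a minimizer `u` by `χ_A u` does not increase the
cost, so by uniqueness `χ_A u = u`.
-/

theorem norm_inv_two_smul_add_sq_le {E : Type*} [NormedAddCommGroup E] [NormedSpace ℝ E]
    (a b : E) : ‖(2⁻¹ : ℝ) • (a + b)‖ ^ 2 ≤ 2⁻¹ * (‖a‖ ^ 2 + ‖b‖ ^ 2) := by
  have h : ‖(2⁻¹ : ℝ) • (a + b)‖ ≤ 2⁻¹ * (‖a‖ + ‖b‖) := by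
    rw [norm_smul, Real.norm_of_nonneg (by norm_num)]
    gcongr
    exact norm_add_le a b
  nlinarith [norm_nonneg ((2⁻¹ : ℝ) • (a + b)), sq_nonneg (‖a‖ - ‖b‖)]

section MidpointStrongConvex

variable {E : Type*} [NormedAddCommGroup E] [NormedSpace ℝ E]

def MidpointStrongConvex (k : ℝ) (F : E → ℝ≥0∞) : Prop :=
  ∀ u v, F ((2⁻¹ : ℝ) • (u + v)) + ENNReal.ofReal (k * ‖u - v‖ ^ 2) ≤ 2⁻¹ * (F u + F v)

theorem MidpointStrongConvex.add {k k' : ℝ} {F G : E → ℝ≥0∞} (hk : 0 ≤ k) (hk' : 0 ≤ k')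
    (hF : MidpointStrongConvex k F) (hG : MidpointStrongConvex k' G) :
    MidpointStrongConvex (k + k') (F + G) := fun u v => by
  have h := add_le_add (hF u v) (hG u v)
  rw [add_mul, ENNReal.ofReal_add (by positivity) (by positivity)]
  simp only [Pi.add_apply]
  calc _ = F ((2⁻¹ : ℝ) • (u + v)) + ENNReal.ofReal (k * ‖u - v‖ ^ 2) +
        (G ((2⁻¹ : ℝ) • (u + v)) + ENNReal.ofReal (k' * ‖u - v‖ ^ 2)) := by ring
    _ ≤ _ := h
    _ = _ := by ring

variable {F : E → ℝ≥0∞} {k : ℝ}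

theorem MidpointStrongConvex.ofReal_mul_norm_sub_sq_le (hF : MidpointStrongConvex k F)
    {m : ℝ≥0∞} (hm : m ≠ ⊤) (hm_le : ∀ w, m ≤ F w) {u v : E} {ε : ℝ≥0∞} (hu : F u ≤ m + ε)
    (hv : F v ≤ m + ε) : ENNReal.ofReal (k * ‖u - v‖ ^ 2) ≤ ε := by
  refine ENNReal.le_of_add_le_add_left hm ?_
  calc m + ENNReal.ofReal (k * ‖u - v‖ ^ 2)
      ≤ F ((2⁻¹ : ℝ) • (u + v)) + ENNReal.ofReal (k * ‖u - v‖ ^ 2) := by gcongr; exact hm_le _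
    _ ≤ 2⁻¹ * (F u + F v) := hF u v
    _ ≤ 2⁻¹ * (2 * (m + ε)) := by rw [two_mul]; gcongr
    _ = m + ε := by
      rw [← mul_assoc, ENNReal.inv_mul_cancel two_ne_zero ENNReal.ofNat_ne_top, one_mul]

theorem MidpointStrongConvex.existsUnique_forall_le [CompleteSpace E]
    (hF : MidpointStrongConvex k F) (hk : 0 < k) (hF_lsc : LowerSemicontinuous F)
    (hF_fin : ∃ u, F u ≠ ⊤) : ∃! u, ∀ v, F u ≤ F v := by
  set m := ⨅ w, F w
  have hm_le : ∀ w, m ≤ F w := iInf_le F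
  have hm : m ≠ ⊤ := ne_top_of_le_ne_top hF_fin.choose_spec (hm_le _)
  have hε : ∀ n : ℕ, ENNReal.ofReal (1 / (n + 1)) ≠ 0 := fun n => by
    rw [Ne, ENNReal.ofReal_eq_zero, not_le]; positivity
  choose u hu using fun n : ℕ => iInf_lt_iff.1 (ENNReal.lt_add_right hm (hε n))
  have hFu : Tendsto (F ∘ u) atTop (𝓝 m) := by
    refine tendsto_of_tendsto_of_tendsto_of_le_of_le tendsto_const_nhds ?_
      (fun n => hm_le _) (fun n => (hu n).le)
    simpa using
      tendsto_const_nhds.add (ENNReal.tendsto_ofReal tendsto_one_div_add_atTop_nhds_zero_nat)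
  have hcauchy : CauchySeq u := by
    refine cauchySeq_of_le_tendsto_0 (fun N : ℕ => √(1 / (N + 1) / k)) (fun n n' N hn hn' => ?_)
      (by simpa using (tendsto_one_div_add_atTop_nhds_zero_nat.div_const k).sqrt)
    have huN : ∀ n, N ≤ n → F (u n) ≤ m + ENNReal.ofReal (1 / (N + 1)) := fun n hn =>
      (hu n).le.trans (by gcongr)
    have h := hF.ofReal_mul_norm_sub_sq_le hm hm_le (huN n hn) (huN n' hn')
    rw [ENNReal.ofReal_le_ofReal_iff (by positivity)] at h
    rw [dist_eq_norm, Real.le_sqrt (norm_nonneg _) (by positivity), le_div_iff₀ hk, mul_comm]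
    exact h
  obtain ⟨u₀, hu₀⟩ := cauchySeq_tendsto_of_complete hcauchy
  have hmin : ∀ v, F u₀ ≤ F v := by
    refine fun v => le_trans (le_of_forall_gt_imp_ge_of_dense fun y hy => ?_) (hm_le v)
    exact (hF_lsc.isClosed_preimage y).mem_of_tendsto hu₀
      ((hFu.eventually (gt_mem_nhds hy)).mono fun n hn => hn.le)
  refine ⟨u₀, hmin, fun v hv => ?_⟩
  have h := hF.ofReal_mul_norm_sub_sq_le hm hm_le (ε := 0)
    (by rw [add_zero]; exact le_iInf hv) (by rw [add_zero]; exact le_iInf hmin)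
  rw [nonpos_iff_eq_zero, ENNReal.ofReal_eq_zero] at h
  have hsq : ‖v - u₀‖ ^ 2 = 0 := le_antisymm (nonpos_of_mul_nonpos_right h hk) (sq_nonneg _)
  rwa [sq_eq_zero_iff, norm_eq_zero, sub_eq_zero] at hsq

theorem midpointStrongConvex_ofReal_half_norm_sub_sq {Y : Type*} [NormedAddCommGroup Y]
    [NormedSpace ℝ Y] (T : E →L[ℝ] Y) (y : Y) :
    MidpointStrongConvex 0 fun u => ENNReal.ofReal (2⁻¹ * ‖T u - y‖ ^ 2) := fun u v => by
  have h : T ((2⁻¹ : ℝ) • (u + v)) - y = (2⁻¹ : ℝ) • ((T u - y) + (T v - y)) := by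
    rw [map_smul, map_add]; module
  beta_reduce
  rw [zero_mul, ENNReal.ofReal_zero, add_zero, h,
    ← ENNReal.ofReal_add (by positivity) (by positivity), ← ENNReal.ofReal_ofNat 2,
    ← ENNReal.ofReal_inv_of_pos two_pos, ← ENNReal.ofReal_mul (by norm_num)]
  gcongr
  linarith [norm_inv_two_smul_add_sq_le (T u - y) (T v - y)]

end MidpointStrongConvex

theorem midpointStrongConvex_of_strongConvex {g : ℝ → ℝ≥0∞} {k : ℝ}
    (hg : ∀ u v l : ℝ, l ∈ Set.Ioo (0 : ℝ) 1 →
      ENNReal.ofReal (k / 2 * l * (1 - l) * (u - v) ^ 2) + g (l * u + (1 - l) * v)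
        ≤ ENNReal.ofReal l * g u + ENNReal.ofReal (1 - l) * g v) :
    MidpointStrongConvex (k / 8) g := fun u v => by
  have hhalf : (1 : ℝ) - 2⁻¹ = 2⁻¹ := by norm_num
  calc g ((2⁻¹ : ℝ) • (u + v)) + ENNReal.ofReal (k / 8 * ‖u - v‖ ^ 2)
      = ENNReal.ofReal (k / 2 * 2⁻¹ * (1 - 2⁻¹) * (u - v) ^ 2) + g (2⁻¹ * u + (1 - 2⁻¹) * v) := by
        rw [add_comm, Real.norm_eq_abs, sq_abs, smul_eq_mul, hhalf, mul_add]
        ring_nf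
    _ ≤ _ := hg u v 2⁻¹ ⟨by norm_num, by norm_num⟩
    _ = 2⁻¹ * (g u + g v) := by
        rw [hhalf, ENNReal.ofReal_inv_of_pos two_pos, ENNReal.ofReal_ofNat, mul_add]

namespace MeasureTheory.Lp

variable {α E : Type*} [MeasurableSpace α] {μ : Measure α} [NormedAddCommGroup E]
  [MeasurableSpace E] [BorelSpace E] {p : ℝ≥0∞} [Fact (1 ≤ p)]

theorem lowerSemicontinuous_lintegral_comp {g : E → ℝ≥0∞} (hg : LowerSemicontinuous g) :
    LowerSemicontinuous fun u : Lp E p μ => ∫⁻ x, g (u x) ∂μ := by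
  refine lowerSemicontinuous_iff_le_liminf.2 fun u => ?_
  obtain ⟨v, hGv, hv⟩ :=
    exists_seq_tendsto_liminf (u := fun u : Lp E p μ => ∫⁻ x, g (u x) ∂μ) (f := 𝓝 u)
  obtain ⟨ns, hns, hae⟩ := (tendstoInMeasure_of_tendsto_Lp hv).exists_seq_tendsto_ae
  calc ∫⁻ x, g (u x) ∂μ ≤ ∫⁻ x, liminf (fun k => g (v (ns k) x)) atTop ∂μ :=
        lintegral_mono_ae <| hae.mono fun x hx => (hg.le_liminf _).trans hx.liminf_le_liminf_comp
    _ ≤ liminf (fun k => ∫⁻ x, g (v (ns k) x) ∂μ) atTop :=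
        lintegral_liminf_le' fun k =>
          hg.measurable.comp_aemeasurable (Lp.aestronglyMeasurable _).aemeasurable
    _ = _ := (hGv.comp hns.tendsto_atTop).liminf_eq

end MeasureTheory.Lp

section L2

variable {α : Type*} [MeasurableSpace α] {μ : Measure α}

theorem MeasureTheory.L2.lintegral_ofReal_sq (w : Lp ℝ 2 μ) :
    ∫⁻ x, ENNReal.ofReal (w x ^ 2) ∂μ = ENNReal.ofReal (‖w‖ ^ 2) := by
  rw [← real_inner_self_eq_norm_sq, L2.inner_def,
    ofReal_integral_eq_lintegral_ofReal (L2.integrable_inner w w)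
      (ae_of_all _ fun x => real_inner_self_nonneg)]
  simp [sq]

theorem MidpointStrongConvex.lintegral_comp {g : ℝ → ℝ≥0∞} {k : ℝ} (hg : MidpointStrongConvex k g)
    (hgm : Measurable g) (hk : 0 ≤ k) :
    MidpointStrongConvex k fun u : Lp ℝ 2 μ => ∫⁻ x, g (u x) ∂μ := fun u v => by
  have hmeas : ∀ w : Lp ℝ 2 μ, AEMeasurable (fun x => g (w x)) μ := fun w =>
    hgm.comp_aemeasurable (Lp.aestronglyMeasurable w).aemeasurable
  calc ∫⁻ x, g (((2⁻¹ : ℝ) • (u + v) : Lp ℝ 2 μ) x) ∂μ + ENNReal.ofReal (k * ‖u - v‖ ^ 2)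
      = ∫⁻ x, (g (((2⁻¹ : ℝ) • (u + v) : Lp ℝ 2 μ) x) +
          ENNReal.ofReal k * ENNReal.ofReal ((u - v : Lp ℝ 2 μ) x ^ 2)) ∂μ := by
        rw [lintegral_add_left' (hmeas _), lintegral_const_mul' _ _ ENNReal.ofReal_ne_top,
          L2.lintegral_ofReal_sq, ENNReal.ofReal_mul hk]
    _ ≤ ∫⁻ x, 2⁻¹ * (g (u x) + g (v x)) ∂μ := by
        refine lintegral_mono_ae ?_
        filter_upwards [Lp.coeFn_smul (2⁻¹ : ℝ) (u + v), Lp.coeFn_add u v, Lp.coeFn_sub u v]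
          with x hmid hadd hsub
        rw [hmid, Pi.smul_apply, hadd, hsub, ← ENNReal.ofReal_mul hk, ← sq_abs, ← Real.norm_eq_abs]
        exact hg (u x) (v x)
    _ = 2⁻¹ * (∫⁻ x, g (u x) ∂μ + ∫⁻ x, g (v x) ∂μ) := by
        rw [lintegral_const_mul' _ _ (by simp), lintegral_add_left' (hmeas u)]

end L2

namespace L0Control

variable {α : Type*} [MeasurableSpace α] {μ : Measure α} {A : Set α}

theorem coeFn_chiMul (hA : MeasurableSet A) (u : Lp ℝ 2 μ) :
    chiMul A u =ᵐ[μ] A.indicator u := by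
  rw [chiMul, dif_pos hA]
  exact MemLp.coeFn_toLp _

theorem chiMul_chiMul (hA : MeasurableSet A) (u : Lp ℝ 2 μ) :
    chiMul A (chiMul A u) = chiMul A u := by
  refine Lp.ext ?_
  filter_upwards [coeFn_chiMul hA (chiMul A u), coeFn_chiMul hA u] with x h₁ h₂
  by_cases hx : x ∈ A <;> simp [h₁, h₂, hx]

theorem norm_chiMul_le (hA : MeasurableSet A) (u : Lp ℝ 2 μ) : ‖chiMul A u‖ ≤ ‖u‖ := by
  rw [Lp.norm_def, Lp.norm_def, eLpNorm_congr_ae (coeFn_chiMul hA u)]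
  exact ENNReal.toReal_mono (Lp.eLpNorm_ne_top u) (eLpNorm_indicator_le _)

def chiMulCLM (hA : MeasurableSet A) : Lp ℝ 2 μ →L[ℝ] Lp ℝ 2 μ :=
  LinearMap.mkContinuous
    { toFun := chiMul A
      map_add' := fun u v => Lp.ext <| by
        filter_upwards [coeFn_chiMul hA (u + v), coeFn_chiMul hA u, coeFn_chiMul hA v,
          Lp.coeFn_add u v, Lp.coeFn_add (chiMul A u) (chiMul A v)] with x h h₁ h₂ h₃ h₄
        rw [h, h₄, Pi.add_apply, h₁, h₂]
        by_cases hx : x ∈ A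
        · simp only [Set.indicator_of_mem hx, h₃, Pi.add_apply]
        · simp only [Set.indicator_of_notMem hx, add_zero]
      map_smul' := fun c u => Lp.ext <| by
        filter_upwards [coeFn_chiMul hA (c • u), coeFn_chiMul hA u, Lp.coeFn_smul c u,
          Lp.coeFn_smul c (chiMul A u)] with x h h₁ h₂ h₃
        rw [h, RingHom.id_apply, h₃, Pi.smul_apply, h₁]
        by_cases hx : x ∈ A
        · simp only [Set.indicator_of_mem hx, h₂, Pi.smul_apply]
        · simp only [Set.indicator_of_notMem hx, smul_zero] }
    1 fun u => (norm_chiMul_le hA u).trans_eq (one_mul _).symm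

section ReducedCost

variable {Y : Type*} [NormedAddCommGroup Y] [NormedSpace ℝ Y]

def reducedJ (S : Lp ℝ 2 μ →L[ℝ] Y) (yd : Y) (g : ℝ → ℝ≥0∞) (A : Set α) (u : Lp ℝ 2 μ) : ℝ≥0∞ :=
  ENNReal.ofReal (2⁻¹ * ‖S (chiMul A u) - yd‖ ^ 2) + ∫⁻ x, g (u x) ∂μ

variable {S : Lp ℝ 2 μ →L[ℝ] Y} {yd : Y} {g : ℝ → ℝ≥0∞}

theorem reducedJ_zero_ne_top (hg0 : g 0 = 0) : reducedJ S yd g A (0 : Lp ℝ 2 μ) ≠ ⊤ := by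
  have hG : ∫⁻ x, g ((0 : Lp ℝ 2 μ) x) ∂μ = 0 := by
    rw [lintegral_congr_ae ((Lp.coeFn_zero ℝ 2 μ).mono fun x hx => by rw [hx, Pi.zero_apply, hg0])]
    exact lintegral_zero
  rw [reducedJ, hG, add_zero]
  exact ENNReal.ofReal_ne_top

theorem reducedJ_chiMul_le (hA : MeasurableSet A) (hg0 : g 0 = 0) (u : Lp ℝ 2 μ) :
    reducedJ S yd g A (chiMul A u) ≤ reducedJ S yd g A u := by
  rw [reducedJ, reducedJ, chiMul_chiMul hA]
  gcongr 1
  refine lintegral_mono_ae ((coeFn_chiMul hA u).mono fun x hx => ?_)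
  by_cases hxA : x ∈ A
  · rw [hx, Set.indicator_of_mem hxA]
  · rw [hx, Set.indicator_of_notMem hxA, hg0]
    positivity

theorem lowerSemicontinuous_reducedJ (hA : MeasurableSet A) (hg : LowerSemicontinuous g) :
    LowerSemicontinuous (reducedJ S yd g A : Lp ℝ 2 μ → ℝ≥0∞) := by
  refine LowerSemicontinuous.add (Continuous.lowerSemicontinuous ?_)
    (Lp.lowerSemicontinuous_lintegral_comp hg)
  exact ENNReal.continuous_ofReal.comp (continuous_const.mul
    (((S.comp (chiMulCLM hA)).continuous.sub continuous_const).norm.pow 2))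

theorem midpointStrongConvex_reducedJ (hA : MeasurableSet A) {k : ℝ} (hk : 0 ≤ k)
    (hg : MidpointStrongConvex k g) (hgm : Measurable g) :
    MidpointStrongConvex k (reducedJ S yd g A : Lp ℝ 2 μ → ℝ≥0∞) := by
  have h := (midpointStrongConvex_ofReal_half_norm_sub_sq (S.comp (chiMulCLM hA)) yd).add le_rfl hk
    (hg.lintegral_comp hgm hk)
  rwa [zero_add] at h

end ReducedCost

variable {Y : Type*} [NormedAddCommGroup Y] [InnerProductSpace ℝ Y] (S : Lp ℝ 2 μ →L[ℝ] Y)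
  (yd : Y) (g : ℝ → ℝ≥0∞)

theorem Jfun_eq_add_reducedJ (β : α → ℝ) (u : Lp ℝ 2 μ) :
    Jfun S yd g β u A = ((∫ x in A, β x ∂μ : ℝ) : EReal) + reducedJ S yd g A u := by
  rw [Jfun, reducedJ, EReal.coe_ennreal_add, EReal.coe_ennreal_ofReal,
    max_eq_left (by positivity), EReal.coe_add, add_comm (2⁻¹ * _ : ℝ).toEReal, add_assoc]

theorem isMinimizer_iff (β : α → ℝ) (u : Lp ℝ 2 μ) :
    IsMinimizer S yd g β A u ↔ ∀ v, reducedJ S yd g A u ≤ reducedJ S yd g A v := by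
  simp only [IsMinimizer, Jfun_eq_add_reducedJ, (EReal.addLECancellable_coe _).add_le_add_iff_left,
    EReal.coe_ennreal_le_coe_ennreal_iff]

end L0Control

theorem existence_uniqueness_of_minimizer_general
    {d : ℕ} {Ω : Set (EuclideanSpace ℝ (Fin d))}
    {Y : Type*} [NormedAddCommGroup Y] [InnerProductSpace ℝ Y]
    (S : Lp ℝ 2 (volume.restrict Ω) →L[ℝ] Y) (yd : Y)
    (g : ℝ → ℝ≥0∞)
    (hg_lsc : LowerSemicontinuous g)
    (hg_zero : ∀ u : ℝ, g u = 0 ↔ u = 0)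
    (β : EuclideanSpace ℝ (Fin d) → ℝ)
    (μ₀ : ℝ) (hμ₀ : 0 < μ₀)
    (hg_sconv : ∀ u v l : ℝ, l ∈ Set.Ioo (0 : ℝ) 1 →
      ENNReal.ofReal (μ₀ / 2 * l * (1 - l) * (u - v) ^ 2) + g (l * u + (1 - l) * v)
        ≤ ENNReal.ofReal l * g u + ENNReal.ofReal (1 - l) * g v)
    (A : Set (EuclideanSpace ℝ (Fin d))) (hAm : MeasurableSet A)
    :
    ∃ uA : Lp ℝ 2 (volume.restrict Ω),
      IsMinimizer S yd g β A uA ∧ chiMul A uA = uA ∧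
        ∀ v : Lp ℝ 2 (volume.restrict Ω), IsMinimizer S yd g β A v → v = uA := by
  have hg0 : g 0 = 0 := (hg_zero 0).2 rfl
  have hconv := midpointStrongConvex_reducedJ (S := S) (yd := yd) hAm (by positivity)
    (midpointStrongConvex_of_strongConvex hg_sconv) hg_lsc.measurable
  obtain ⟨uA, hmin, huniq⟩ := hconv.existsUnique_forall_le (by positivity)
    (lowerSemicontinuous_reducedJ hAm hg_lsc) ⟨0, reducedJ_zero_ne_top hg0⟩
  simp only [isMinimizer_iff]
  exact ⟨uA, hmin, huniq _ fun v => (reducedJ_chiMul_le hAm hg0 uA).trans (hmin v), huniq⟩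

/-- For every Lebesgue measurable set `A ⊆ Ω` there exists a uniquely
determined minimizer `u_A ∈ L²(Ω)` of `u ↦ J(u, A)`, and it satisfies `χ_A · u_A = u_A`. -/
theorem existence_uniqueness_of_minimizer
    {d : ℕ} {Ω : Set (EuclideanSpace ℝ (Fin d))}
    (hΩm : MeasurableSet Ω) (hΩfin : volume Ω < ⊤)
    {Y : Type*} [NormedAddCommGroup Y] [InnerProductSpace ℝ Y] [CompleteSpace Y]
    (S : Lp ℝ 2 (volume.restrict Ω) →L[ℝ] Y) (yd : Y)
    (g : ℝ → ℝ≥0∞)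
    (hg_proper : ∃ u : ℝ, g u ≠ ⊤)
    (hg_lsc : LowerSemicontinuous g)
    (hg_zero : ∀ u : ℝ, g u = 0 ↔ u = 0)
    (β : EuclideanSpace ℝ (Fin d) → ℝ)
    (hβ : Integrable β (volume.restrict Ω))
    (μ₀ : ℝ) (hμ₀ : 0 < μ₀)
    (hg_sconv : ∀ u v l : ℝ, l ∈ Set.Ioo (0 : ℝ) 1 →
      ENNReal.ofReal (μ₀ / 2 * l * (1 - l) * (u - v) ^ 2) + g (l * u + (1 - l) * v)
        ≤ ENNReal.ofReal l * g u + ENNReal.ofReal (1 - l) * g v)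
    (A : Set (EuclideanSpace ℝ (Fin d))) (hAm : MeasurableSet A) (hAΩ : A ⊆ Ω)
    :
    ∃ uA : Lp ℝ 2 (volume.restrict Ω),
      IsMinimizer S yd g β A uA ∧ chiMul A uA = uA ∧
        ∀ v : Lp ℝ 2 (volume.restrict Ω), IsMinimizer S yd g β A v → v = uA :=
  existence_uniqueness_of_minimizer_general S yd g hg_lsc hg_zero β μ₀ hμ₀ hg_sconv A hAm
end
end

section
/- There is a constant M > 0 such that ‖y_A − y_d‖_Y + ‖u_A‖_{L²(Ω)} ≤ M for all measurable sets A ⊆ Ω and all solutions (u_A, y_A, p_A) of (P_A). -/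
open MeasureTheory ENNReal Set Filter Metric Topology
open scoped Classical symmDiff NNReal

noncomputable section

open L0Control

/-! Comparing a minimizer `u_A` with the admissible control `0` bounds
`½‖y_A − y_d‖² + ∫ g(u_A)` by `½‖y_d‖²`: the `β`-terms of both sides are the same.
Strong convexity together with `g 0 = 0` gives the quadratic growth `g t ≥ μ₀/4 · t²`,
so the same bound controls `‖u_A‖²`. -/

theorem EReal.coe_add_coe_ennreal_le_coe {x y : ℝ} {I : ℝ≥0∞}
    (h : (x : EReal) + (I : EReal) ≤ (y : EReal)) : I ≠ ⊤ ∧ x + I.toReal ≤ y := by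
  have hfin : I ≠ ⊤ := by
    rintro rfl
    simp at h
  refine ⟨hfin, ?_⟩
  rwa [← EReal.coe_ennreal_toReal hfin, ← EReal.coe_add, EReal.coe_le_coe_iff] at h

namespace L0Control

-- Strong convexity between `t` and `0` at the midpoint.
theorem ofReal_mul_sq_le_of_strongConvex {g : ℝ → ℝ≥0∞} {μ₀ : ℝ} (hg0 : g 0 = 0)
    (hg_sconv : ∀ u v l : ℝ, l ∈ Set.Ioo (0 : ℝ) 1 →
      ENNReal.ofReal (μ₀ / 2 * l * (1 - l) * (u - v) ^ 2) + g (l * u + (1 - l) * v)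
        ≤ ENNReal.ofReal l * g u + ENNReal.ofReal (1 - l) * g v) (t : ℝ) :
    ENNReal.ofReal (μ₀ / 4 * t ^ 2) ≤ g t := by
  have hmid := hg_sconv t 0 (1 / 2) ⟨by norm_num, by norm_num⟩
  simp only [hg0, mul_zero, add_zero] at hmid
  calc ENNReal.ofReal (μ₀ / 4 * t ^ 2)
      = ENNReal.ofReal 2 * ENNReal.ofReal (μ₀ / 2 * (1 / 2) * (1 - 1 / 2) * (t - 0) ^ 2) := by
        rw [← ENNReal.ofReal_mul zero_le_two]
        ring_nf
    _ ≤ ENNReal.ofReal 2 * (ENNReal.ofReal (1 / 2) * g t) :=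
        mul_le_mul_right (le_self_add.trans hmid) _
    _ = g t := by
        rw [← mul_assoc, ← ENNReal.ofReal_mul zero_le_two]
        norm_num

theorem ofReal_mul_norm_sq_le_lintegral {α : Type*} [MeasurableSpace α] {μ : Measure α}
    {g : ℝ → ℝ≥0∞} {c : ℝ} (hc : 0 ≤ c) (hg : ∀ t, ENNReal.ofReal (c * t ^ 2) ≤ g t)
    (u : Lp ℝ 2 μ) :
    ENNReal.ofReal (c * ‖u‖ ^ 2) ≤ ∫⁻ x, g (u x) ∂μ := by
  have hnorm_sq : ∫ x, u x * u x ∂μ = ‖u‖ ^ 2 := by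
    rw [← real_inner_self_eq_norm_sq, L2.inner_def]
    simp [pow_two]
  calc ENNReal.ofReal (c * ‖u‖ ^ 2)
      = ENNReal.ofReal (∫ x, c * (u x * u x) ∂μ) := by
        rw [integral_const_mul, hnorm_sq]
    _ = ∫⁻ x, ENNReal.ofReal (c * (u x * u x)) ∂μ :=
        ofReal_integral_eq_lintegral_ofReal ((L2.integrable_inner (𝕜 := ℝ) u u).const_mul c)
          (.of_forall fun x => mul_nonneg hc (mul_self_nonneg _))
    _ ≤ ∫⁻ x, g (u x) ∂μ := lintegral_mono fun x => by simpa [pow_two] using hg (u x)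

variable {α : Type*} [MeasurableSpace α] {μ : Measure α}

@[simp]
theorem chiMul_zero (A : Set α) : chiMul A (0 : Lp ℝ 2 μ) = 0 := by
  unfold chiMul
  split_ifs
  · have h0 : A.indicator ((0 : Lp ℝ 2 μ) : α → ℝ) =ᵐ[μ] (0 : α → ℝ) := by
      filter_upwards [Lp.coeFn_zero ℝ 2 μ] with x hx
      rw [Set.indicator_apply, hx]
      exact ite_self _
    rw [MemLp.toLp_congr _ (MemLp.zero (ε := ℝ) (p := 2) (μ := μ)) h0, MemLp.toLp_zero]
  · rfl

theorem lintegral_comp_zero {p : ℝ≥0∞} {g : ℝ → ℝ≥0∞} (hg0 : g 0 = 0) :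
    ∫⁻ x, g ((0 : Lp ℝ p μ) x) ∂μ = 0 := by
  have h0 : (fun x => g ((0 : Lp ℝ p μ) x)) =ᵐ[μ] fun _ => 0 := by
    filter_upwards [Lp.coeFn_zero ℝ p μ] with x hx
    rw [hx, Pi.zero_apply, hg0]
  rw [lintegral_congr_ae h0, lintegral_zero]

variable {Y : Type*} [NormedAddCommGroup Y] [InnerProductSpace ℝ Y]

theorem Jfun_zero (S : Lp ℝ 2 μ →L[ℝ] Y) (yd : Y) {g : ℝ → ℝ≥0∞} (β : α → ℝ) (A : Set α)
    (hg0 : g 0 = 0) :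
    Jfun S yd g β 0 A = ((2⁻¹ * ‖yd‖ ^ 2 + ∫ x in A, β x ∂μ : ℝ) : EReal) := by
  rw [Jfun, chiMul_zero, map_zero, zero_sub, norm_neg, lintegral_comp_zero hg0,
    EReal.coe_ennreal_zero, add_zero]

theorem IsMinimizer.ofReal_add_lintegral_le {S : Lp ℝ 2 μ →L[ℝ] Y} {yd : Y} {g : ℝ → ℝ≥0∞}
    {β : α → ℝ} {A : Set α} {u : Lp ℝ 2 μ} (hu : IsMinimizer S yd g β A u) (hg0 : g 0 = 0) :
    ENNReal.ofReal (2⁻¹ * ‖S (chiMul A u) - yd‖ ^ 2) + ∫⁻ x, g (u x) ∂μ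
      ≤ ENNReal.ofReal (2⁻¹ * ‖yd‖ ^ 2) := by
  have h0 := hu 0
  rw [Jfun_zero S yd β A hg0, Jfun] at h0
  obtain ⟨hfin, hle⟩ := EReal.coe_add_coe_ennreal_le_coe h0
  rw [← ENNReal.ofReal_toReal hfin, ← ENNReal.ofReal_add (by positivity) ENNReal.toReal_nonneg]
  exact ENNReal.ofReal_le_ofReal (by linarith)

end L0Control

theorem uniform_bound_state_control_general
    {d : ℕ} {Ω : Set (EuclideanSpace ℝ (Fin d))}
    {Y : Type*} [NormedAddCommGroup Y] [InnerProductSpace ℝ Y] [CompleteSpace Y]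
    (S : Lp ℝ 2 (volume.restrict Ω) →L[ℝ] Y) (yd : Y)
    (g : ℝ → ℝ≥0∞)
    (hg_zero : ∀ u : ℝ, g u = 0 ↔ u = 0)
    (β : EuclideanSpace ℝ (Fin d) → ℝ)
    (μ₀ : ℝ) (hμ₀ : 0 < μ₀)
    (hg_sconv : ∀ u v l : ℝ, l ∈ Set.Ioo (0 : ℝ) 1 →
      ENNReal.ofReal (μ₀ / 2 * l * (1 - l) * (u - v) ^ 2) + g (l * u + (1 - l) * v)
        ≤ ENNReal.ofReal l * g u + ENNReal.ofReal (1 - l) * g v)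
    :
    ∃ M : ℝ, 0 < M ∧
      ∀ A : Set (EuclideanSpace ℝ (Fin d)), MeasurableSet A → A ⊆ Ω →
        ∀ (uA : Lp ℝ 2 (volume.restrict Ω)) (yA : Y) (pA : Lp ℝ 2 (volume.restrict Ω)),
          IsSolution S yd g β A uA yA pA → ‖yA - yd‖ + ‖uA‖ ≤ M := by
  refine ⟨‖yd‖ + √(2 / μ₀ * ‖yd‖ ^ 2) + 1, by positivity, ?_⟩
  rintro A - - uA _ _ ⟨hmin, rfl, -⟩
  have hg0 : g 0 = 0 := (hg_zero 0).2 rfl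
  have henergy := hmin.ofReal_add_lintegral_le hg0
  have hgrowth := ofReal_mul_norm_sq_le_lintegral (μ := volume.restrict Ω) (by positivity)
    (ofReal_mul_sq_le_of_strongConvex hg0 hg_sconv) uA
  have hreal : 2⁻¹ * ‖S (chiMul A uA) - yd‖ ^ 2 + μ₀ / 4 * ‖uA‖ ^ 2 ≤ 2⁻¹ * ‖yd‖ ^ 2 := by
    rw [← ENNReal.ofReal_le_ofReal_iff (by positivity),
      ENNReal.ofReal_add (by positivity) (by positivity)]
    exact (add_le_add_right hgrowth _).trans henergy
  have hstate : ‖S (chiMul A uA) - yd‖ ≤ ‖yd‖ :=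
    (pow_le_pow_iff_left₀ (norm_nonneg _) (norm_nonneg _) two_ne_zero).1 (by nlinarith)
  have hcontrol : ‖uA‖ ≤ √(2 / μ₀ * ‖yd‖ ^ 2) := by
    rw [Real.le_sqrt (norm_nonneg _) (by positivity), div_mul_eq_mul_div, le_div_iff₀ hμ₀]
    nlinarith
  linarith

/-- Uniform bound: there is `M > 0` with
`‖y_A − y_d‖_Y + ‖u_A‖_{L²} ≤ M` for all measurable `A ⊆ Ω` and all solutions of `(P_A)`. -/
theorem uniform_bound_state_control
    {d : ℕ} {Ω : Set (EuclideanSpace ℝ (Fin d))}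
    (hΩm : MeasurableSet Ω) (hΩfin : volume Ω < ⊤)
    {Y : Type*} [NormedAddCommGroup Y] [InnerProductSpace ℝ Y] [CompleteSpace Y]
    (S : Lp ℝ 2 (volume.restrict Ω) →L[ℝ] Y) (yd : Y)
    (g : ℝ → ℝ≥0∞)
    (hg_proper : ∃ u : ℝ, g u ≠ ⊤)
    (hg_lsc : LowerSemicontinuous g)
    (hg_zero : ∀ u : ℝ, g u = 0 ↔ u = 0)
    (β : EuclideanSpace ℝ (Fin d) → ℝ)
    (hβ : Integrable β (volume.restrict Ω))
    (μ₀ : ℝ) (hμ₀ : 0 < μ₀)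
    (hg_sconv : ∀ u v l : ℝ, l ∈ Set.Ioo (0 : ℝ) 1 →
      ENNReal.ofReal (μ₀ / 2 * l * (1 - l) * (u - v) ^ 2) + g (l * u + (1 - l) * v)
        ≤ ENNReal.ofReal l * g u + ENNReal.ofReal (1 - l) * g v)
    :
    ∃ M : ℝ, 0 < M ∧
      ∀ A : Set (EuclideanSpace ℝ (Fin d)), MeasurableSet A → A ⊆ Ω →
        ∀ (uA : Lp ℝ 2 (volume.restrict Ω)) (yA : Y) (pA : Lp ℝ 2 (volume.restrict Ω)),
          IsSolution S yd g β A uA yA pA → ‖yA - yd‖ + ‖uA‖ ≤ M :=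
  uniform_bound_state_control_general S yd g hg_zero β μ₀ hμ₀ hg_sconv
end
end

section
/- Let A, B ⊆ Ω be measurable and let (u_A, y_A, p_A) and (u_B, y_B, p_B) be solutions of (P_A) and (P_B). Then J(u_A,A) − J(u_B,B) + ½‖y_B − y_A‖_Y² = ∫_Ω ( g(u_A) − g(u_B) + χ_A·p_A·(u_A − u_B) + (χ_A − χ_B)·(β + p_A·u_B) ) dx. -/
open MeasureTheory ENNReal Set Filter Metric Topology
open scoped Classical symmDiff NNReal

noncomputable section

open L0Control

/-! The quadratic tracking term is expanded by the three-point identity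
`½‖a − c‖² − ½‖b − c‖² + ½‖b − a‖² = ⟪a − c, a − b⟫` with `a = y_A`, `b = y_B`, `c = y_d`;
since `y_A − y_B = S(χ_A u_A − χ_B u_B)`, moving `S` across the inner product turns this into
`∫ p_A (χ_A u_A − χ_B u_B)`. The `β`-terms give `∫ (χ_A − χ_B) β`, and regrouping the integrands
yields the stated right-hand side. All terms are finite because `J(u_A, A) ≤ J(0, A) < ∞`. -/

theorem norm_sub_sq_sub_norm_sub_sq_add_norm_sub_sq {F : Type*} [NormedAddCommGroup F]
    [InnerProductSpace ℝ F] (a b c : F) :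
    ‖a - c‖ ^ 2 - ‖b - c‖ ^ 2 + ‖b - a‖ ^ 2 = 2 * inner ℝ (a - c) (a - b) := by
  have hba : b - a = (b - c) - (a - c) := by abel
  have hab : a - b = (a - c) - (b - c) := by abel
  rw [hba, norm_sub_sq_real (b - c) (a - c), hab, inner_sub_right (a - c),
    real_inner_self_eq_norm_sq, real_inner_comm (b - c) (a - c)]
  ring

namespace MeasureTheory.L2

variable {α : Type*} [MeasurableSpace α] {μ : Measure α}

theorem integrable_mul_of_ae_eq (p w : Lp ℝ 2 μ) {f : α → ℝ} (hf : w =ᵐ[μ] f) :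
    Integrable (fun x => p x * f x) μ := by
  refine (integrable_inner (𝕜 := ℝ) p w).congr ?_
  filter_upwards [hf] with x hx
  rw [RCLike.inner_apply', hx, conj_trivial]

theorem inner_eq_integral_mul_of_ae_eq (p w : Lp ℝ 2 μ) {f : α → ℝ} (hf : w =ᵐ[μ] f) :
    inner ℝ p w = ∫ x, p x * f x ∂μ := by
  rw [inner_def]
  refine integral_congr_ae ?_
  filter_upwards [hf] with x hx
  rw [RCLike.inner_apply', hx, conj_trivial]

end MeasureTheory.L2

namespace L0Control

variable {α : Type*}

theorem indicator_eq_chi_mul (A : Set α) (f : α → ℝ) (x : α) :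
    A.indicator f x = chi A x * f x := by
  by_cases h : x ∈ A <;> simp [chi, h]

variable [MeasurableSpace α] {μ : Measure α}

theorem chiMul_ae_eq_indicator {A : Set α} (hA : MeasurableSet A) (u : Lp ℝ 2 μ) :
    chiMul A u =ᵐ[μ] A.indicator u := by
  rw [chiMul, dif_pos hA]
  exact MemLp.coeFn_toLp _

theorem chiMul_sub_chiMul_ae_eq {A B : Set α} (hA : MeasurableSet A) (hB : MeasurableSet B)
    (u v : Lp ℝ 2 μ) :
    chiMul A u - chiMul B v =ᵐ[μ] fun x => A.indicator u x - B.indicator v x := by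
  filter_upwards [Lp.coeFn_sub (chiMul A u) (chiMul B v),
    chiMul_ae_eq_indicator hA u, chiMul_ae_eq_indicator hB v] with x hsub hu hv
  rw [hsub, Pi.sub_apply, hu, hv]

variable {Y : Type*} [NormedAddCommGroup Y] [InnerProductSpace ℝ Y]

def smoothPart (S : Lp ℝ 2 μ →L[ℝ] Y) (yd : Y) (β : α → ℝ) (u : Lp ℝ 2 μ) (A : Set α) : ℝ :=
  2⁻¹ * ‖S (chiMul A u) - yd‖ ^ 2 + ∫ x in A, β x ∂μ

theorem Jfun_eq_coe {S : Lp ℝ 2 μ →L[ℝ] Y} {yd : Y} {g : ℝ → ℝ≥0∞} {β : α → ℝ}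
    {u : Lp ℝ 2 μ} {A : Set α} (hg : ∫⁻ x, g (u x) ∂μ ≠ ⊤) :
    Jfun S yd g β u A = ((smoothPart S yd β u A + (∫⁻ x, g (u x) ∂μ).toReal : ℝ) : EReal) := by
  rw [Jfun, smoothPart, ← EReal.coe_ennreal_toReal hg, ← EReal.coe_add]

theorem IsMinimizer.lintegral_ne_top {S : Lp ℝ 2 μ →L[ℝ] Y} {yd : Y} {g : ℝ → ℝ≥0∞}
    {β : α → ℝ} {A : Set α} {u : Lp ℝ 2 μ} (hg0 : g 0 = 0) (hu : IsMinimizer S yd g β A u) :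
    ∫⁻ x, g (u x) ∂μ ≠ ⊤ := by
  intro htop
  have hJ0 : ∫⁻ x, g ((0 : Lp ℝ 2 μ) x) ∂μ = 0 :=
    lintegral_eq_zero_of_ae_eq_zero <| by
      filter_upwards [Lp.coeFn_zero ℝ 2 μ] with x hx
      rw [hx, Pi.zero_apply, hg0, Pi.zero_apply]
  have hle := hu 0
  rw [Jfun, Jfun, htop, hJ0, EReal.coe_ennreal_top, EReal.coe_add_top, EReal.coe_ennreal_zero,
    add_zero, top_le_iff] at hle
  exact EReal.coe_ne_top _ hle

theorem smoothPart_sub_add_half_norm_sq [CompleteSpace Y] {S : Lp ℝ 2 μ →L[ℝ] Y} {yd : Y}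
    {β : α → ℝ} (hβ : Integrable β μ) {A B : Set α} (hA : MeasurableSet A)
    (hB : MeasurableSet B) (uA uB p : Lp ℝ 2 μ)
    (hp : p = ContinuousLinearMap.adjoint S (S (chiMul A uA) - yd)) :
    smoothPart S yd β uA A - smoothPart S yd β uB B
        + 2⁻¹ * ‖S (chiMul B uB) - S (chiMul A uA)‖ ^ 2
      = ∫ x, (chi A x * p x * (uA x - uB x) + (chi A x - chi B x) * (β x + p x * uB x)) ∂μ := by
  have hdiff := chiMul_sub_chiMul_ae_eq hA hB uA uB
  have hquad : 2⁻¹ * ‖S (chiMul A uA) - yd‖ ^ 2 - 2⁻¹ * ‖S (chiMul B uB) - yd‖ ^ 2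
        + 2⁻¹ * ‖S (chiMul B uB) - S (chiMul A uA)‖ ^ 2
      = ∫ x, p x * (A.indicator uA x - B.indicator uB x) ∂μ := by
    rw [← L2.inner_eq_integral_mul_of_ae_eq p _ hdiff, hp,
      ContinuousLinearMap.adjoint_inner_left, map_sub]
    linarith [norm_sub_sq_sub_norm_sub_sq_add_norm_sub_sq (S (chiMul A uA)) (S (chiMul B uB)) yd]
  have hβAB : ∫ x in A, β x ∂μ - ∫ x in B, β x ∂μ
      = ∫ x, (A.indicator β x - B.indicator β x) ∂μ := by
    rw [integral_sub (hβ.indicator hA) (hβ.indicator hB), integral_indicator hA,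
      integral_indicator hB]
  calc smoothPart S yd β uA A - smoothPart S yd β uB B
        + 2⁻¹ * ‖S (chiMul B uB) - S (chiMul A uA)‖ ^ 2
      = ∫ x, p x * (A.indicator uA x - B.indicator uB x) ∂μ
          + ∫ x, (A.indicator β x - B.indicator β x) ∂μ := by
        rw [← hquad, ← hβAB, smoothPart, smoothPart]; ring
    _ = ∫ x, (chi A x * p x * (uA x - uB x) + (chi A x - chi B x) * (β x + p x * uB x)) ∂μ := by
        rw [← integral_add (g := fun x => A.indicator β x - B.indicator β x)
          (L2.integrable_mul_of_ae_eq p _ hdiff) ((hβ.indicator hA).sub (hβ.indicator hB))]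
        congr 1 with x
        simp only [indicator_eq_chi_mul]
        ring

end L0Control

theorem expansion_of_objective_difference_general
    {d : ℕ} {Ω : Set (EuclideanSpace ℝ (Fin d))}
    {Y : Type*} [NormedAddCommGroup Y] [InnerProductSpace ℝ Y] [CompleteSpace Y]
    (S : Lp ℝ 2 (volume.restrict Ω) →L[ℝ] Y) (yd : Y)
    (g : ℝ → ℝ≥0∞)
    (hg_zero : ∀ u : ℝ, g u = 0 ↔ u = 0)
    (β : EuclideanSpace ℝ (Fin d) → ℝ)
    (hβ : Integrable β (volume.restrict Ω))
    (A : Set (EuclideanSpace ℝ (Fin d))) (hAm : MeasurableSet A)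
    (B : Set (EuclideanSpace ℝ (Fin d))) (hBm : MeasurableSet B)
    (uA : Lp ℝ 2 (volume.restrict Ω)) (yA : Y) (pA : Lp ℝ 2 (volume.restrict Ω))
    (hsolA : IsSolution S yd g β A uA yA pA)
    (uB : Lp ℝ 2 (volume.restrict Ω)) (yB : Y) (pB : Lp ℝ 2 (volume.restrict Ω))
    (hsolB : IsSolution S yd g β B uB yB pB)
    :
    Jfun S yd g β uA A - Jfun S yd g β uB B + ((2⁻¹ * ‖yB - yA‖ ^ 2 : ℝ) : EReal)
      = ((∫⁻ x, g (uA x) ∂(volume.restrict Ω) : ℝ≥0∞) : EReal)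
          - ((∫⁻ x, g (uB x) ∂(volume.restrict Ω) : ℝ≥0∞) : EReal)
          + ((∫ x, (chi A x * pA x * (uA x - uB x)
              + (chi A x - chi B x) * (β x + pA x * uB x)) ∂(volume.restrict Ω) : ℝ) : EReal) := by
  obtain ⟨hminA, rfl, hpA⟩ := hsolA
  obtain ⟨hminB, rfl, -⟩ := hsolB
  have hg0 : g 0 = 0 := (hg_zero 0).mpr rfl
  have hGA := hminA.lintegral_ne_top hg0
  have hGB := hminB.lintegral_ne_top hg0
  have key := smoothPart_sub_add_half_norm_sq hβ hAm hBm uA uB pA hpA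
  rw [Jfun_eq_coe hGA, Jfun_eq_coe hGB, ← EReal.coe_ennreal_toReal hGA,
    ← EReal.coe_ennreal_toReal hGB, ← key]
  norm_cast
  ring

/-- Exact expansion of the difference of objective values:
`J(u_A,A) − J(u_B,B) + ½‖y_B − y_A‖² =
  ∫_Ω (g(u_A) − g(u_B) + χ_A p_A (u_A − u_B) + (χ_A − χ_B)(β + p_A u_B)) dx`. -/
theorem expansion_of_objective_difference
    {d : ℕ} {Ω : Set (EuclideanSpace ℝ (Fin d))}
    (hΩm : MeasurableSet Ω) (hΩfin : volume Ω < ⊤)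
    {Y : Type*} [NormedAddCommGroup Y] [InnerProductSpace ℝ Y] [CompleteSpace Y]
    (S : Lp ℝ 2 (volume.restrict Ω) →L[ℝ] Y) (yd : Y)
    (g : ℝ → ℝ≥0∞)
    (hg_proper : ∃ u : ℝ, g u ≠ ⊤)
    (hg_lsc : LowerSemicontinuous g)
    (hg_zero : ∀ u : ℝ, g u = 0 ↔ u = 0)
    (β : EuclideanSpace ℝ (Fin d) → ℝ)
    (hβ : Integrable β (volume.restrict Ω))
    (hg_conv : ∀ u v l : ℝ, l ∈ Set.Ioo (0 : ℝ) 1 →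
      g (l * u + (1 - l) * v) ≤ ENNReal.ofReal l * g u + ENNReal.ofReal (1 - l) * g v)
    (A : Set (EuclideanSpace ℝ (Fin d))) (hAm : MeasurableSet A) (hAΩ : A ⊆ Ω)
    (B : Set (EuclideanSpace ℝ (Fin d))) (hBm : MeasurableSet B) (hBΩ : B ⊆ Ω)
    (uA : Lp ℝ 2 (volume.restrict Ω)) (yA : Y) (pA : Lp ℝ 2 (volume.restrict Ω))
    (hsolA : IsSolution S yd g β A uA yA pA)
    (uB : Lp ℝ 2 (volume.restrict Ω)) (yB : Y) (pB : Lp ℝ 2 (volume.restrict Ω))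
    (hsolB : IsSolution S yd g β B uB yB pB)
    :
    Jfun S yd g β uA A - Jfun S yd g β uB B + ((2⁻¹ * ‖yB - yA‖ ^ 2 : ℝ) : EReal)
      = ((∫⁻ x, g (uA x) ∂(volume.restrict Ω) : ℝ≥0∞) : EReal)
          - ((∫⁻ x, g (uB x) ∂(volume.restrict Ω) : ℝ≥0∞) : EReal)
          + ((∫ x, (chi A x * pA x * (uA x - uB x)
              + (chi A x - chi B x) * (β x + pA x * uB x)) ∂(volume.restrict Ω) : ℝ) : EReal) :=
  expansion_of_objective_difference_general S yd g hg_zero β hβ A hAm B hBm uA yA pA hsolA uB yB pB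
    hsolB
end
end
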